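/- Recursion relations: for every n and all indices j for which the named bottom-row columns lie in {1,…,n}, the following identities of subsets of Fpl(n,+) hold, each right-hand union being disjoint: (i) Fpl^{a,odd}_j = Fpl^{c,even}_{j−1} ∪ Fpl^{a,even}_{j−1}; (ii) Fpl^{b,odd}_j = Fpl^{c,even}_j ∪ Fpl^{b,even}_j; (iii) Fpl^{a,even}_j = Fpl^{c,odd}_j ∪ Fpl^{a,odd}_j; (iv) Fpl^{b,even}_j = Fpl^{c,odd}_{j+1} ∪ Fpl^{b,odd}_{j+1}. -/
import Mathlib


open scoped Classical

/-! ### Link patterns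

A link pattern on `2n` cyclically ordered points is a fixed-point-free noncrossing
involution.  The point `i : ZMod (2*n)` represents the label `lbl (2*n) i ∈ {1,…,2n}`
(so label arithmetic is arithmetic in `ZMod (2*n)`). -/

instance instNeZeroTwoMul (n : ℕ) [NeZero n] : NeZero (2 * n) :=
  ⟨by have := NeZero.ne n; omega⟩

/-- The label in `{1,…,M}` represented by a point of `ZMod M`. -/
def lbl (M : ℕ) (i : ZMod M) : ℕ := if i.val = 0 then M else i.val

/-- A fixed-point-free involution of the `2n` points on a circle which is noncrossing. -/
def IsLinkPattern (n : ℕ) (f : ZMod (2 * n) → ZMod (2 * n)) : Prop :=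
  Function.Involutive f ∧ (∀ i, f i ≠ i) ∧
    ∀ i j : ZMod (2 * n), ¬ (i.val < j.val ∧ j.val < (f i).val ∧ (f i).val < (f j).val)

/-- The set `LP(n)` of link patterns on `2n` points, as a subtype. -/
abbrev LinkPattern (n : ℕ) := {f : ZMod (2 * n) → ZMod (2 * n) // IsLinkPattern n f}

/-- Rotation `R`: `R π` pairs `i-1` with `j-1` whenever `π` pairs `i` with `j`. -/
def rotMap (M : ℕ) (f : ZMod M → ZMod M) : ZMod M → ZMod M := fun i => f (i + 1) - 1

/-- Inverse rotation `R⁻¹`. -/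
def rotInvMap (M : ℕ) (f : ZMod M → ZMod M) : ZMod M → ZMod M := fun i => f (i - 1) + 1

/-- The Temperley–Lieb map `e_j` (here `j : ZMod M` represents the label `lbl M j`):
if `π` pairs `j` with `j+1` it does nothing, otherwise it re-pairs `j` with `j+1`
and `π(j)` with `π(j+1)`. -/
def eMap (M : ℕ) (j : ZMod M) (f : ZMod M → ZMod M) : ZMod M → ZMod M := fun i =>
  if f j = j + 1 then f i
  else if i = j then j + 1
  else if i = j + 1 then j
  else if i = f j then f (j + 1)
  else if i = f (j + 1) then f j
  else f i

/-! ### The `n × n` FPL domain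

Vertices are `(x,y)` with `1 ≤ x,y ≤ n`.  `SqEdge.h x y` is the horizontal edge joining
`(x,y)` and `(x+1,y)` (valid for `0 ≤ x ≤ n`, `1 ≤ y ≤ n`; `x = 0` and `x = n` give the
west/east external edges); `SqEdge.v x y` is the vertical edge joining `(x,y)` and
`(x,y+1)` (valid for `1 ≤ x ≤ n`, `0 ≤ y ≤ n`; `y = 0` and `y = n` give the south/north
external edges).  A configuration is a map `SqEdge → Bool` (`true` = black). -/

inductive SqEdge : Type
  | h : ℕ → ℕ → SqEdge
  | v : ℕ → ℕ → SqEdge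
deriving DecidableEq

/-- Validity of an edge for the `n × n` domain. -/
def validB (n : ℕ) : SqEdge → Bool
  | .h x y => decide (x ≤ n) && decide (1 ≤ y) && decide (y ≤ n)
  | .v x y => decide (1 ≤ x) && decide (x ≤ n) && decide (y ≤ n)

/-- The external edge with counterclockwise label `k ∈ {1,…,4n}`, starting from the
bottom external edge of the corner vertex `(1,1)`. -/
def extEdge (n k : ℕ) : SqEdge :=
  if k ≤ n then .v k 0
  else if k ≤ 2 * n then .h n (k - n)
  else if k ≤ 3 * n then .v (3 * n + 1 - k) n
  else .h 0 (4 * n + 1 - k)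

def IsExternal (n : ℕ) (e : SqEdge) : Prop := ∃ k, 1 ≤ k ∧ k ≤ 4 * n ∧ e = extEdge n k

/-- The west, east, south, north edges incident to the vertex `(x,y)`. -/
def wEdge (x y : ℕ) : SqEdge := .h (x - 1) y
def eEdge (x y : ℕ) : SqEdge := .h x y
def sEdge (x y : ℕ) : SqEdge := .v x (y - 1)
def nEdge (x y : ℕ) : SqEdge := .v x y

def IncidentAt (e : SqEdge) (x y : ℕ) : Prop :=
  e = wEdge x y ∨ e = eEdge x y ∨ e = sEdge x y ∨ e = nEdge x y

def blackDeg (φ : SqEdge → Bool) (x y : ℕ) : ℕ :=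
  (if φ (wEdge x y) then 1 else 0) + (if φ (eEdge x y) then 1 else 0) +
    (if φ (sEdge x y) then 1 else 0) + (if φ (nEdge x y) then 1 else 0)

/-- A fully-packed loop configuration on the `n × n` domain: it is supported on the
valid edges, and every vertex is incident to exactly two black (and two white) edges. -/
def IsFpl (n : ℕ) (φ : SqEdge → Bool) : Prop :=
  (∀ e, φ e = true → validB n e = true) ∧
    ∀ x y, 1 ≤ x → x ≤ n → 1 ≤ y → y ≤ n → blackDeg φ x y = 2

/-- Alternating boundary colouring `τ₊` (external label `1` black). -/
def BPlus (n : ℕ) (φ : SqEdge → Bool) : Prop :=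
  ∀ k, 1 ≤ k → k ≤ 4 * n → (φ (extEdge n k) = true ↔ k % 2 = 1)

/-- Complementary alternating boundary colouring `τ₋`. -/
def BMinus (n : ℕ) (φ : SqEdge → Bool) : Prop :=
  ∀ k, 1 ≤ k → k ≤ 4 * n → (φ (extEdge n k) = true ↔ k % 2 = 0)

/-- Two (valid) edges of colour `b` sharing an internal vertex. -/
def adjC (n : ℕ) (b : Bool) (φ : SqEdge → Bool) (e e' : SqEdge) : Prop :=
  e ≠ e' ∧ validB n e = true ∧ validB n e' = true ∧ φ e = b ∧ φ e' = b ∧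
    ∃ x y, 1 ≤ x ∧ x ≤ n ∧ 1 ≤ y ∧ y ≤ n ∧ IncidentAt e x y ∧ IncidentAt e' x y

/-- Connectivity through monochromatic paths of colour `b`. -/
def Conn (n : ℕ) (b : Bool) (φ : SqEdge → Bool) : SqEdge → SqEdge → Prop :=
  Relation.ReflTransGen (adjC n b φ)

/-- In `Fpl(n,+)` the black external edge with black label `t ∈ {1,…,2n}` has overall
label `2t-1`.  `φ` has link pattern (matching) `g` iff for every point `i` the black
external edges with black labels `lbl i` and `lbl (g i)` are joined by a black path. -/
def RealizesP (n : ℕ) (φ : SqEdge → Bool) (g : ZMod (2 * n) → ZMod (2 * n)) : Prop :=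
  ∀ i, Conn n true φ (extEdge n (2 * lbl (2 * n) i - 1)) (extEdge n (2 * lbl (2 * n) (g i) - 1))

/-- In `Fpl(n,-)` the black external edge with black label `t` has overall label `2t`
(black labelling starting from the bottom external edge of the vertex `(2,1)`). -/
def RealizesM (n : ℕ) (φ : SqEdge → Bool) (g : ZMod (2 * n) → ZMod (2 * n)) : Prop :=
  ∀ i, Conn n true φ (extEdge n (2 * lbl (2 * n) i)) (extEdge n (2 * lbl (2 * n) (g i)))

/-- `Ψ_{n,+}(g)`: the number of FPLs in `Fpl(n,+)` with link pattern `g`. -/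
noncomputable def PsiP (n : ℕ) (g : ZMod (2 * n) → ZMod (2 * n)) : ℕ :=
  Set.ncard {φ : SqEdge → Bool | IsFpl n φ ∧ BPlus n φ ∧ RealizesP n φ g}

/-- `Ψ_{n,-}(g)`: the number of FPLs in `Fpl(n,-)` with link pattern `g`. -/
noncomputable def PsiM (n : ℕ) (g : ZMod (2 * n) → ZMod (2 * n)) : ℕ :=
  Set.ncard {φ : SqEdge → Bool | IsFpl n φ ∧ BMinus n φ ∧ RealizesM n φ g}

/-! ### Vertex types

At a vertex, type `a`: the black edges are `{S,W}` or `{N,E}`; type `b`: `{S,E}` or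
`{N,W}`; type `c`: `{N,S}` or `{E,W}`. -/

def typeA (φ : SqEdge → Bool) (x y : ℕ) : Prop :=
  (φ (sEdge x y) = true ∧ φ (wEdge x y) = true ∧ φ (nEdge x y) = false ∧ φ (eEdge x y) = false) ∨
  (φ (nEdge x y) = true ∧ φ (eEdge x y) = true ∧ φ (sEdge x y) = false ∧ φ (wEdge x y) = false)

def typeB (φ : SqEdge → Bool) (x y : ℕ) : Prop :=
  (φ (sEdge x y) = true ∧ φ (eEdge x y) = true ∧ φ (nEdge x y) = false ∧ φ (wEdge x y) = false) ∨
  (φ (nEdge x y) = true ∧ φ (wEdge x y) = true ∧ φ (sEdge x y) = false ∧ φ (eEdge x y) = false)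

def typeC (φ : SqEdge → Bool) (x y : ℕ) : Prop :=
  (φ (nEdge x y) = true ∧ φ (sEdge x y) = true ∧ φ (eEdge x y) = false ∧ φ (wEdge x y) = false) ∨
  (φ (eEdge x y) = true ∧ φ (wEdge x y) = true ∧ φ (nEdge x y) = false ∧ φ (sEdge x y) = false)

/-- FPLs in `Fpl(n,+)` whose bottom-row vertex `(2j-1,1)` has type `a`, `b`, `c`. -/
def FplA_odd (n j : ℕ) : Set (SqEdge → Bool) :=
  {φ | IsFpl n φ ∧ BPlus n φ ∧ typeA φ (2 * j - 1) 1}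
def FplB_odd (n j : ℕ) : Set (SqEdge → Bool) :=
  {φ | IsFpl n φ ∧ BPlus n φ ∧ typeB φ (2 * j - 1) 1}
def FplC_odd (n j : ℕ) : Set (SqEdge → Bool) :=
  {φ | IsFpl n φ ∧ BPlus n φ ∧ typeC φ (2 * j - 1) 1}

/-- FPLs in `Fpl(n,+)` whose bottom-row vertex `(2j,1)` has type `a`, `b`, `c`. -/
def FplA_even (n j : ℕ) : Set (SqEdge → Bool) :=
  {φ | IsFpl n φ ∧ BPlus n φ ∧ typeA φ (2 * j) 1}
def FplB_even (n j : ℕ) : Set (SqEdge → Bool) :=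
  {φ | IsFpl n φ ∧ BPlus n φ ∧ typeB φ (2 * j) 1}
def FplC_even (n j : ℕ) : Set (SqEdge → Bool) :=
  {φ | IsFpl n φ ∧ BPlus n φ ∧ typeC φ (2 * j) 1}


lemma disjCA (φ : SqEdge → Bool) (x y : ℕ) (hc : typeC φ x y) (ha : typeA φ x y) : False := by
  rcases hc with ⟨h1,h2,h3,h4⟩|⟨h1,h2,h3,h4⟩ <;> rcases ha with ⟨g1,g2,g3,g4⟩|⟨g1,g2,g3,g4⟩ <;>
    simp_all

lemma disjCB (φ : SqEdge → Bool) (x y : ℕ) (hc : typeC φ x y) (hb : typeB φ x y) : False := by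
  rcases hc with ⟨h1,h2,h3,h4⟩|⟨h1,h2,h3,h4⟩ <;> rcases hb with ⟨g1,g2,g3,g4⟩|⟨g1,g2,g3,g4⟩ <;>
    simp_all

lemma stepA (φ : SqEdge → Bool) (x y : ℕ)
    (hL : blackDeg φ x y = 2) (hR : blackDeg φ (x+1) y = 2)
    (hS : φ (sEdge x y) = !φ (sEdge (x+1) y)) :
    typeA φ (x+1) y ↔ (typeC φ x y ∨ typeA φ x y) := by
  simp only [blackDeg, typeA, typeC, wEdge, eEdge, sEdge, nEdge, Nat.add_sub_cancel] at *
  cases h1 : φ (.h (x-1) y) <;> cases h2 : φ (.h x y) <;> cases h3 : φ (.v x (y-1)) <;>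
    cases h4 : φ (.h (x+1) y) <;> cases h5 : φ (.v (x+1) (y-1)) <;>
    cases h6 : φ (.v x y) <;> cases h7 : φ (.v (x+1) y) <;> simp_all

lemma stepB (φ : SqEdge → Bool) (x y : ℕ)
    (hL : blackDeg φ x y = 2) (hR : blackDeg φ (x+1) y = 2)
    (hS : φ (sEdge x y) = !φ (sEdge (x+1) y)) :
    typeB φ x y ↔ (typeC φ (x+1) y ∨ typeB φ (x+1) y) := by
  simp only [blackDeg, typeB, typeC, wEdge, eEdge, sEdge, nEdge, Nat.add_sub_cancel] at *
  cases h1 : φ (.h (x-1) y) <;> cases h2 : φ (.h x y) <;> cases h3 : φ (.v x (y-1)) <;>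
    cases h4 : φ (.h (x+1) y) <;> cases h5 : φ (.v (x+1) (y-1)) <;>
    cases h6 : φ (.v x y) <;> cases h7 : φ (.v (x+1) y) <;> simp_all

lemma bottomS (n : ℕ) (φ : SqEdge → Bool) (hb : BPlus n φ) (x : ℕ) (hx : 1 ≤ x)
    (hxn : x ≤ n) : φ (sEdge x 1) = decide (x % 2 = 1) := by
  have h := hb x hx (by omega)
  have he : extEdge n x = sEdge x 1 := by simp [extEdge, sEdge, hxn]
  rw [he] at h
  by_cases hx2 : x % 2 = 1 <;> simp [hx2] at h ⊢ <;> simp [h]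

lemma hSouth (n : ℕ) (φ : SqEdge → Bool) (hb : BPlus n φ) (x : ℕ) (hx : 1 ≤ x)
    (hxn : x + 1 ≤ n) : φ (sEdge x 1) = !φ (sEdge (x+1) 1) := by
  rw [bottomS n φ hb x hx (by omega), bottomS n φ hb (x+1) (by omega) hxn]
  rcases Nat.mod_two_eq_zero_or_one x with h|h
  · have h2 : (x+1) % 2 = 1 := by omega
    simp [h, h2]
  · have h2 : (x+1) % 2 = 0 := by omega
    simp [h, h2]

lemma relA (n x : ℕ) (hx1 : 1 ≤ x) (hxn : x + 1 ≤ n) :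
    {φ : SqEdge → Bool | IsFpl n φ ∧ BPlus n φ ∧ typeA φ (x+1) 1} =
      {φ : SqEdge → Bool | IsFpl n φ ∧ BPlus n φ ∧ typeC φ x 1} ∪
        {φ : SqEdge → Bool | IsFpl n φ ∧ BPlus n φ ∧ typeA φ x 1} := by
  ext φ
  simp only [Set.mem_union, Set.mem_setOf_eq]
  constructor
  · rintro ⟨hf, hb, ht⟩
    have key := stepA φ x 1 (hf.2 x 1 hx1 (by omega) le_rfl (by omega))
      (hf.2 (x+1) 1 (by omega) hxn le_rfl (by omega)) (hSouth n φ hb x hx1 hxn)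
    rcases key.mp ht with h|h
    · exact Or.inl ⟨hf, hb, h⟩
    · exact Or.inr ⟨hf, hb, h⟩
  · rintro (⟨hf, hb, h⟩|⟨hf, hb, h⟩) <;>
    · have key := stepA φ x 1 (hf.2 x 1 hx1 (by omega) le_rfl (by omega))
        (hf.2 (x+1) 1 (by omega) hxn le_rfl (by omega)) (hSouth n φ hb x hx1 hxn)
      exact ⟨hf, hb, key.mpr (by tauto)⟩

lemma relB (n x : ℕ) (hx1 : 1 ≤ x) (hxn : x + 1 ≤ n) :
    {φ : SqEdge → Bool | IsFpl n φ ∧ BPlus n φ ∧ typeB φ x 1} =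
      {φ : SqEdge → Bool | IsFpl n φ ∧ BPlus n φ ∧ typeC φ (x+1) 1} ∪
        {φ : SqEdge → Bool | IsFpl n φ ∧ BPlus n φ ∧ typeB φ (x+1) 1} := by
  ext φ
  simp only [Set.mem_union, Set.mem_setOf_eq]
  constructor
  · rintro ⟨hf, hb, ht⟩
    have key := stepB φ x 1 (hf.2 x 1 hx1 (by omega) le_rfl (by omega))
      (hf.2 (x+1) 1 (by omega) hxn le_rfl (by omega)) (hSouth n φ hb x hx1 hxn)
    rcases key.mp ht with h|h
    · exact Or.inl ⟨hf, hb, h⟩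
    · exact Or.inr ⟨hf, hb, h⟩
  · rintro (⟨hf, hb, h⟩|⟨hf, hb, h⟩) <;>
    · have key := stepB φ x 1 (hf.2 x 1 hx1 (by omega) le_rfl (by omega))
        (hf.2 (x+1) 1 (by omega) hxn le_rfl (by omega)) (hSouth n φ hb x hx1 hxn)
      exact ⟨hf, hb, key.mpr (by tauto)⟩

lemma disjSetA (n x : ℕ) :
    Disjoint {φ : SqEdge → Bool | IsFpl n φ ∧ BPlus n φ ∧ typeC φ x 1}
      {φ : SqEdge → Bool | IsFpl n φ ∧ BPlus n φ ∧ typeA φ x 1} := by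
  rw [Set.disjoint_left]
  rintro φ ⟨_, _, hc⟩ ⟨_, _, ha⟩
  exact disjCA φ x 1 hc ha

lemma disjSetB (n x : ℕ) :
    Disjoint {φ : SqEdge → Bool | IsFpl n φ ∧ BPlus n φ ∧ typeC φ x 1}
      {φ : SqEdge → Bool | IsFpl n φ ∧ BPlus n φ ∧ typeB φ x 1} := by
  rw [Set.disjoint_left]
  rintro φ ⟨_, _, hc⟩ ⟨_, _, hb⟩
  exact disjCB φ x 1 hc hb

/-- **Recursion relations** for the one-site–refined classes of `Fpl(n,+)`, as
identities of sets, each union being disjoint. -/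
theorem recursion_relations (n : ℕ) (hn : 1 ≤ n) :
    (∀ j, 2 ≤ j → 2 * j - 1 ≤ n →
      FplA_odd n j = FplC_even n (j - 1) ∪ FplA_even n (j - 1) ∧
      Disjoint (FplC_even n (j - 1)) (FplA_even n (j - 1))) ∧
    (∀ j, 1 ≤ j → 2 * j ≤ n →
      FplB_odd n j = FplC_even n j ∪ FplB_even n j ∧
      Disjoint (FplC_even n j) (FplB_even n j)) ∧
    (∀ j, 1 ≤ j → 2 * j ≤ n →
      FplA_even n j = FplC_odd n j ∪ FplA_odd n j ∧
      Disjoint (FplC_odd n j) (FplA_odd n j)) ∧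
    (∀ j, 1 ≤ j → 2 * j + 1 ≤ n →
      FplB_even n j = FplC_odd n (j + 1) ∪ FplB_odd n (j + 1) ∧
      Disjoint (FplC_odd n (j + 1)) (FplB_odd n (j + 1))) := by
  refine ⟨?_, ?_, ?_, ?_⟩
  · intro j hj hjn
    have e1 : 2 * (j - 1) = 2 * j - 2 := by omega
    have e2 : 2 * j - 1 = (2 * j - 2) + 1 := by omega
    unfold FplA_odd FplC_even FplA_even
    rw [e1, e2]
    exact ⟨relA n (2 * j - 2) (by omega) (by omega), disjSetA n _⟩
  · intro j hj hjn
    have e2 : 2 * j = (2 * j - 1) + 1 := by omega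
    unfold FplB_odd FplC_even FplB_even
    rw [e2]
    exact ⟨relB n (2 * j - 1) (by omega) (by omega), disjSetB n _⟩
  · intro j hj hjn
    have e2 : 2 * j = (2 * j - 1) + 1 := by omega
    unfold FplA_even FplC_odd FplA_odd
    rw [e2]
    exact ⟨relA n (2 * j - 1) (by omega) (by omega), disjSetA n _⟩
  · intro j hj hjn
    have e1 : 2 * (j + 1) - 1 = 2 * j + 1 := by omega
    have e2 : 2 * j + 1 = (2 * j) + 1 := by omega
    unfold FplB_even FplC_odd FplB_odd
    rw [e1]
    exact ⟨relB n (2 * j) (by omega) (by omega), disjSetB n _⟩
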